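/- arXiv:1708.01513 — 2 statements merged into one kernel-verified Lean document; each statement's English description precedes it below -/
import Mathlib

section
/- Let μ be a fully supported probability measure on Ω = S^V for finite sets V and S, let B_1,…,B_m be subsets of V with ∪_k B_k = V, and let B_D = (1/m)Σ_{k=1}^m K_{B_k} be the corresponding heat-bath block dynamics. Suppose that for each k ∈ {1,…,m} and each configuration τ on V∖B_k there is a transition matrix S_k^τ on configurations of B_k that is ergodic, reversible with respect to the conditional measure μ(·|τ), and positive semidefinite, and let S_D be the dynamics that picks k uniformly at random and, when the current configuration agrees with τ off B_k, updates the configuration on B_k by one step of S_k^τ. Then the spectral gap satisfies λ(S_D) ≥ λ(B_D) · min_{k, τ} λ(S_k^τ). -/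
open scoped BigOperators

attribute [local instance] Classical.propDecidable

/-- Heat-bath update matrix on configurations `V → S` for the block `A ⊆ V`:
`K_A(σ,σ') = 1(σ = σ' off A) · μ(σ'(A) | σ(V∖A))`. -/
noncomputable def hbK {V S : Type*} [Fintype V] [DecidableEq V] [Fintype S]
    (μ : (V → S) → ℝ) (A : Finset V) : Matrix (V → S) (V → S) ℝ :=
  Matrix.of fun σ σ' =>
    if ∀ v, v ∉ A → σ v = σ' v then
      μ σ' / ∑ η : V → S, if ∀ v, v ∉ A → η v = σ v then μ η else 0
    else 0

/-- Glue a configuration on `A` with a configuration on its complement. -/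
def glueG {V S : Type*} [Fintype V] [DecidableEq V] (A : Finset V)
    (σ : {v // v ∈ A} → S) (τ : {v // v ∈ Aᶜ} → S) : V → S :=
  fun v => if h : v ∈ A then σ ⟨v, h⟩ else τ ⟨v, Finset.mem_compl.mpr h⟩

/-- Conditional measure `μ(·|τ)` on configurations of `A`, given the configuration `τ`
on `V∖A`. -/
noncomputable def condMeas {V S : Type*} [Fintype V] [DecidableEq V] [Fintype S]
    (μ : (V → S) → ℝ) (A : Finset V) (τ : {v // v ∈ Aᶜ} → S) :
    ({v // v ∈ A} → S) → ℝ :=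
  fun σ => μ (glueG A σ τ) / ∑ σ' : {v // v ∈ A} → S, μ (glueG A σ' τ)

/-- The heat-bath block dynamics `B_D = (1/m) Σ_k K_{B_k}`. -/
noncomputable def blockHB {V S : Type*} [Fintype V] [DecidableEq V] [Fintype S]
    (μ : (V → S) → ℝ) (m : ℕ) (B : Fin m → Finset V) : Matrix (V → S) (V → S) ℝ :=
  (m : ℝ)⁻¹ • ∑ k, hbK μ (B k)

/-- The composite block dynamics `S_D`: pick `k` uniformly at random; if the current
configuration agrees with `τ` off `B_k`, update the configuration on `B_k` by one
step of `S_k^τ`. -/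
noncomputable def compositeBlock {V S : Type*} [Fintype V] [DecidableEq V] [Fintype S]
    (m : ℕ) (B : Fin m → Finset V)
    (Sk : ∀ k : Fin m, ({v // v ∈ (B k)ᶜ} → S) →
      Matrix ({v // v ∈ B k} → S) ({v // v ∈ B k} → S) ℝ) :
    Matrix (V → S) (V → S) ℝ :=
  Matrix.of fun σ σ' =>
    (m : ℝ)⁻¹ * ∑ k : Fin m,
      if ∀ v, v ∉ B k → σ v = σ' v then
        Sk k (fun v : {v // v ∈ (B k)ᶜ} => σ v.1)
          (fun v : {v // v ∈ B k} => σ v.1) (fun v : {v // v ∈ B k} => σ' v.1)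
      else 0

/-- Variance w.r.t. `μ`. -/
noncomputable def varMu {Ω : Type*} [Fintype Ω] (μ f : Ω → ℝ) : ℝ :=
  ∑ x, (f x - ∑ y, f y * μ y) ^ 2 * μ x

/-- Dirichlet form `⟨f, (I − P) f⟩_μ`. -/
noncomputable def dirichletForm {Ω : Type*} [Fintype Ω]
    (μ : Ω → ℝ) (P : Matrix Ω Ω ℝ) (f : Ω → ℝ) : ℝ :=
  ∑ x, f x * (f x - P.mulVec f x) * μ x

/-- Spectral gap via the variational characterization
`λ(P) = min { ⟨f,(I−P)f⟩_μ / Var_μ(f) : Var_μ(f) ≠ 0 }`. -/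
noncomputable def gapD {Ω : Type*} [Fintype Ω] (μ : Ω → ℝ) (P : Matrix Ω Ω ℝ) : ℝ :=
  sInf {r : ℝ | ∃ f : Ω → ℝ, varMu μ f ≠ 0 ∧ r = dirichletForm μ P f / varMu μ f}

/-- A finite Markov chain is ergodic iff some power of its transition matrix is
entrywise positive. -/
def IsErgodic {n : Type*} [Fintype n] [DecidableEq n] (P : Matrix n n ℝ) : Prop :=
  ∃ T : ℕ, ∀ x y, 0 < (P ^ T) x y

/-! ### Auxiliary lemmas -/

set_option linter.unusedSectionVars false
set_option maxHeartbeats 1000000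

section VarDir
variable {Ω : Type*} [Fintype Ω]

lemma varMu_nonneg (ν : Ω → ℝ) (hν : ∀ x, 0 ≤ ν x) (f : Ω → ℝ) : 0 ≤ varMu ν f :=
  Finset.sum_nonneg fun x _ => mul_nonneg (sq_nonneg _) (hν x)

lemma varMu_eq (ν : Ω → ℝ) (hν1 : ∑ x, ν x = 1) (g : Ω → ℝ) :
    varMu ν g = ∑ x, g x * (g x - ∑ y, g y * ν y) * ν x := by
  set c := ∑ y, g y * ν y with hc
  have hz : ∑ x, (g x - c) * ν x = 0 := by
    have : ∑ x, (g x - c) * ν x = (∑ x, g x * ν x) - c * ∑ x, ν x := by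
      rw [Finset.mul_sum, ← Finset.sum_sub_distrib]
      exact Finset.sum_congr rfl fun x _ => by ring
    rw [this, hν1, ← hc]; ring
  have h1 : ∀ x, (g x - c) ^ 2 * ν x = g x * (g x - c) * ν x - c * ((g x - c) * ν x) :=
    fun x => by ring
  unfold varMu
  rw [← hc]
  calc ∑ x, (g x - c) ^ 2 * ν x
      = ∑ x, (g x * (g x - c) * ν x - c * ((g x - c) * ν x)) :=
        Finset.sum_congr rfl fun x _ => h1 x
    _ = (∑ x, g x * (g x - c) * ν x) - c * ∑ x, (g x - c) * ν x := by
        rw [Finset.sum_sub_distrib, Finset.mul_sum]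
    _ = ∑ x, g x * (g x - c) * ν x := by rw [hz]; ring

lemma mulVec_eq (P : Matrix Ω Ω ℝ) (f : Ω → ℝ) (x : Ω) :
    P.mulVec f x = ∑ y, P x y * f y := by
  simp [Matrix.mulVec, dotProduct]

lemma dirichlet_eq_double (ν : Ω → ℝ) (P : Matrix Ω Ω ℝ)
    (hrow : ∀ x, ∑ y, P x y = 1) (f : Ω → ℝ) :
    dirichletForm ν P f = ∑ x, ∑ y, ν x * P x y * (f x * (f x - f y)) := by
  unfold dirichletForm
  refine Finset.sum_congr rfl fun x _ => ?_
  rw [mulVec_eq]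
  have : ∑ y, ν x * P x y * (f x * (f x - f y))
      = (∑ y, P x y) * (ν x * f x * f x) - (∑ y, P x y * f y) * (ν x * f x) := by
    rw [Finset.sum_mul, Finset.sum_mul, ← Finset.sum_sub_distrib]
    exact Finset.sum_congr rfl fun y _ => by ring
  rw [this, hrow x]; ring

lemma dirichlet_nonneg (ν : Ω → ℝ) (P : Matrix Ω Ω ℝ)
    (hν : ∀ x, 0 ≤ ν x) (hP : ∀ x y, 0 ≤ P x y)
    (hrow : ∀ x, ∑ y, P x y = 1)
    (hrev : ∀ x y, ν x * P x y = ν y * P y x) (f : Ω → ℝ) :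
    0 ≤ dirichletForm ν P f := by
  have key := dirichlet_eq_double ν P hrow f
  have key2 : dirichletForm ν P f = ∑ x, ∑ y, ν x * P x y * (f y * (f y - f x)) := by
    rw [key, Finset.sum_comm]
    refine Finset.sum_congr rfl fun x _ => Finset.sum_congr rfl fun y _ => ?_
    rw [hrev y x]
  have h2 : 2 * dirichletForm ν P f = ∑ x, ∑ y, ν x * P x y * (f x - f y) ^ 2 := by
    calc 2 * dirichletForm ν P f
        = (∑ x, ∑ y, ν x * P x y * (f x * (f x - f y)))
          + ∑ x, ∑ y, ν x * P x y * (f y * (f y - f x)) := by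
          rw [← key, ← key2]; ring
      _ = ∑ x, ∑ y, ν x * P x y * (f x - f y) ^ 2 := by
          rw [← Finset.sum_add_distrib]
          refine Finset.sum_congr rfl fun x _ => ?_
          rw [← Finset.sum_add_distrib]
          exact Finset.sum_congr rfl fun y _ => by ring
  have hnn : 0 ≤ ∑ x, ∑ y, ν x * P x y * (f x - f y) ^ 2 :=
    Finset.sum_nonneg fun x _ => Finset.sum_nonneg fun y _ =>
      mul_nonneg (mul_nonneg (hν x) (hP x y)) (sq_nonneg _)
  linarith

lemma gap_nonneg (ν : Ω → ℝ) (P : Matrix Ω Ω ℝ)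
    (hν : ∀ x, 0 ≤ ν x) (hP : ∀ x y, 0 ≤ P x y)
    (hrow : ∀ x, ∑ y, P x y = 1)
    (hrev : ∀ x y, ν x * P x y = ν y * P y x) :
    0 ≤ gapD ν P := by
  apply Real.sInf_nonneg
  rintro r ⟨f, hf, rfl⟩
  exact div_nonneg (dirichlet_nonneg ν P hν hP hrow hrev f) (varMu_nonneg ν hν f)

lemma gap_mul_var_le (ν : Ω → ℝ) (P : Matrix Ω Ω ℝ)
    (hν : ∀ x, 0 ≤ ν x) (hP : ∀ x y, 0 ≤ P x y)
    (hrow : ∀ x, ∑ y, P x y = 1)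
    (hrev : ∀ x y, ν x * P x y = ν y * P y x) (f : Ω → ℝ) :
    gapD ν P * varMu ν f ≤ dirichletForm ν P f := by
  by_cases h : varMu ν f = 0
  · rw [h, mul_zero]; exact dirichlet_nonneg ν P hν hP hrow hrev f
  · have hv : 0 < varMu ν f := lt_of_le_of_ne (varMu_nonneg ν hν f) (Ne.symm h)
    have hle : gapD ν P ≤ dirichletForm ν P f / varMu ν f := by
      apply csInf_le
      · exact ⟨0, fun r ⟨g, hg, hr⟩ => hr ▸ div_nonneg
          (dirichlet_nonneg ν P hν hP hrow hrev g) (varMu_nonneg ν hν g)⟩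
      · exact ⟨f, h, rfl⟩
    calc gapD ν P * varMu ν f ≤ (dirichletForm ν P f / varMu ν f) * varMu ν f :=
          mul_le_mul_of_nonneg_right hle (le_of_lt hv)
      _ = dirichletForm ν P f := div_mul_cancel₀ _ h

lemma dir_const (ν : Ω → ℝ) (hν1 : ∑ x, ν x = 1) (g : Ω → ℝ) :
    dirichletForm ν (Matrix.of fun _ y => ν y) g = varMu ν g := by
  rw [varMu_eq ν hν1 g]
  unfold dirichletForm
  refine Finset.sum_congr rfl fun x _ => ?_
  have : (Matrix.of fun _ y => ν y).mulVec g x = ∑ y, g y * ν y := by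
    rw [mulVec_eq]
    exact Finset.sum_congr rfl fun y _ => by rw [Matrix.of_apply, mul_comm]
  rw [this]

lemma avg_sub {m : ℕ} (hm : (m : ℝ) ≠ 0) (a : ℝ) (b : Fin m → ℝ) :
    a - (m : ℝ)⁻¹ * ∑ k, b k = (m : ℝ)⁻¹ * ∑ k, (a - b k) := by
  rw [Finset.sum_sub_distrib, Finset.sum_const, Finset.card_univ, Fintype.card_fin,
    nsmul_eq_mul, mul_sub, ← mul_assoc, inv_mul_cancel₀ hm, one_mul]

/-- Averaging over blocks: Dirichlet form of an averaged kernel. -/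
lemma dir_avg (μ : Ω → ℝ) {m : ℕ} (hm : (m : ℝ) ≠ 0) (P : Matrix Ω Ω ℝ)
    (t : Fin m → Ω → Ω → ℝ)
    (hP : ∀ σ σ', P σ σ' = (m : ℝ)⁻¹ * ∑ k, t k σ σ') (f : Ω → ℝ) :
    dirichletForm μ P f
      = (m : ℝ)⁻¹ * ∑ k, ∑ σ, f σ * (f σ - ∑ σ', t k σ σ' * f σ') * μ σ := by
  have hmv : ∀ σ, P.mulVec f σ = (m : ℝ)⁻¹ * ∑ k, ∑ σ', t k σ σ' * f σ' := by
    intro σ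
    rw [mulVec_eq]
    calc ∑ σ', P σ σ' * f σ'
        = ∑ σ', (m : ℝ)⁻¹ * ∑ k, t k σ σ' * f σ' := by
          refine Finset.sum_congr rfl fun σ' _ => ?_
          rw [hP σ σ', mul_assoc, Finset.sum_mul]
      _ = (m : ℝ)⁻¹ * ∑ σ', ∑ k, t k σ σ' * f σ' := by rw [Finset.mul_sum]
      _ = (m : ℝ)⁻¹ * ∑ k, ∑ σ', t k σ σ' * f σ' := by rw [Finset.sum_comm]
  unfold dirichletForm
  calc ∑ σ, f σ * (f σ - P.mulVec f σ) * μ σ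
      = ∑ σ, ∑ k, (m : ℝ)⁻¹ * (f σ * (f σ - ∑ σ', t k σ σ' * f σ') * μ σ) := by
        refine Finset.sum_congr rfl fun σ _ => ?_
        rw [hmv σ, avg_sub hm, Finset.mul_sum, Finset.mul_sum, Finset.sum_mul]
        exact Finset.sum_congr rfl fun k _ => by ring
    _ = ∑ k, ∑ σ, (m : ℝ)⁻¹ * (f σ * (f σ - ∑ σ', t k σ σ' * f σ') * μ σ) := Finset.sum_comm
    _ = (m : ℝ)⁻¹ * ∑ k, ∑ σ, f σ * (f σ - ∑ σ', t k σ σ' * f σ') * μ σ := by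
        rw [Finset.mul_sum]
        exact Finset.sum_congr rfl fun k _ => by rw [Finset.mul_sum]

end VarDir

section Split
variable {V S : Type*} [Fintype V] [DecidableEq V] [Fintype S]

def restA (A : Finset V) (σ : V → S) : {v // v ∈ A} → S := fun v => σ v.1
def restC (A : Finset V) (σ : V → S) : {v // v ∈ Aᶜ} → S := fun v => σ v.1

lemma restA_glue (A : Finset V) (x : {v // v ∈ A} → S) (τ : {v // v ∈ Aᶜ} → S) :
    restA A (glueG A x τ) = x := by
  funext v; simp [restA, glueG, v.2]

lemma restC_glue (A : Finset V) (x : {v // v ∈ A} → S) (τ : {v // v ∈ Aᶜ} → S) :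
    restC A (glueG A x τ) = τ := by
  funext v
  have hv : v.1 ∉ A := Finset.mem_compl.mp v.2
  simp [restC, glueG, hv]

lemma glue_rest (A : Finset V) (σ : V → S) : glueG A (restA A σ) (restC A σ) = σ := by
  funext v
  by_cases h : v ∈ A <;> simp [glueG, restA, restC, h]

noncomputable def splitEquiv (A : Finset V) :
    (V → S) ≃ (({v // v ∈ A} → S) × ({v // v ∈ Aᶜ} → S)) where
  toFun σ := (restA A σ, restC A σ)
  invFun p := glueG A p.1 p.2
  left_inv σ := glue_rest A σ
  right_inv p := by
    cases p with
    | mk x τ => simp [restA_glue, restC_glue]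

lemma sum_split (A : Finset V) (F : (V → S) → ℝ) :
    ∑ σ, F σ = ∑ τ : {v // v ∈ Aᶜ} → S, ∑ x : {v // v ∈ A} → S, F (glueG A x τ) := by
  rw [Fintype.sum_equiv (splitEquiv A) F (fun p => F (glueG A p.1 p.2))
    (fun σ => by simp [splitEquiv, glue_rest])]
  rw [Fintype.sum_prod_type]
  exact Finset.sum_comm

lemma agree_iff (A : Finset V) (σ σ' : V → S) :
    (∀ v, v ∉ A → σ v = σ' v) ↔ restC A σ = restC A σ' := by
  constructor
  · intro h; funext v; exact h v.1 (Finset.mem_compl.mp v.2)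
  · intro h v hv; exact congrFun h ⟨v, Finset.mem_compl.mpr hv⟩

lemma agree_glue_iff (A : Finset V) (x y : {v // v ∈ A} → S) (τ τ' : {v // v ∈ Aᶜ} → S) :
    (∀ v, v ∉ A → glueG A x τ v = glueG A y τ' v) ↔ τ = τ' := by
  rw [agree_iff, restC_glue, restC_glue]

/-- Marginal weight of the off-block configuration `τ`. -/
noncomputable def margG (μ : (V → S) → ℝ) (A : Finset V) (τ : {v // v ∈ Aᶜ} → S) : ℝ :=
  ∑ x : {v // v ∈ A} → S, μ (glueG A x τ)

lemma margG_pos (μ : (V → S) → ℝ) (hpos : ∀ σ, 0 < μ σ) [Nonempty (V → S)]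
    (A : Finset V) (τ : {v // v ∈ Aᶜ} → S) : 0 < margG μ A τ := by
  have : Nonempty ({v // v ∈ A} → S) := ⟨restA A (Classical.arbitrary _)⟩
  exact Finset.sum_pos (fun x _ => hpos _) Finset.univ_nonempty

lemma condMeas_nonneg (μ : (V → S) → ℝ) (hpos : ∀ σ, 0 < μ σ)
    (A : Finset V) (τ : {v // v ∈ Aᶜ} → S) (x : {v // v ∈ A} → S) :
    0 ≤ condMeas μ A τ x :=
  div_nonneg (hpos _).le (Finset.sum_nonneg fun _ _ => (hpos _).le)

lemma condMeas_sum (μ : (V → S) → ℝ) (hpos : ∀ σ, 0 < μ σ) [Nonempty (V → S)]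
    (A : Finset V) (τ : {v // v ∈ Aᶜ} → S) :
    ∑ x, condMeas μ A τ x = 1 := by
  unfold condMeas
  rw [← Finset.sum_div]
  exact div_self (margG_pos μ hpos A τ).ne'

/-- Key per-block decomposition of the Dirichlet-type sum. -/
lemma perBlock (μ : (V → S) → ℝ) (hpos : ∀ σ, 0 < μ σ) [Nonempty (V → S)] (A : Finset V)
    (Q : ({v // v ∈ Aᶜ} → S) → Matrix ({v // v ∈ A} → S) ({v // v ∈ A} → S) ℝ)
    (f : (V → S) → ℝ) :
    ∑ σ, f σ * (f σ - ∑ σ', (if ∀ v, v ∉ A → σ v = σ' v then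
        Q (restC A σ) (restA A σ) (restA A σ') else 0) * f σ') * μ σ
    = ∑ τ, margG μ A τ *
        dirichletForm (condMeas μ A τ) (Q τ) (fun x => f (glueG A x τ)) := by
  have hin : ∀ (τ : {v // v ∈ Aᶜ} → S) (x : {v // v ∈ A} → S),
      (∑ σ', (if ∀ v, v ∉ A → glueG A x τ v = σ' v then
        Q (restC A (glueG A x τ)) (restA A (glueG A x τ)) (restA A σ') else 0) * f σ')
      = ∑ y, Q τ x y * f (glueG A y τ) := by
    intro τ x
    rw [sum_split A (fun σ' => (if ∀ v, v ∉ A → glueG A x τ v = σ' v then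
        Q (restC A (glueG A x τ)) (restA A (glueG A x τ)) (restA A σ') else 0) * f σ')]
    rw [Finset.sum_comm]
    refine Finset.sum_congr rfl fun y _ => ?_
    have : ∀ τ' : {v // v ∈ Aᶜ} → S,
        (if ∀ v, v ∉ A → glueG A x τ v = glueG A y τ' v then
          Q (restC A (glueG A x τ)) (restA A (glueG A x τ)) (restA A (glueG A y τ')) else 0)
            * f (glueG A y τ')
        = if τ = τ' then Q τ x y * f (glueG A y τ') else 0 := by
      intro τ'
      rw [restC_glue, restA_glue, restA_glue]
      by_cases h : τ = τ'
      · rw [if_pos ((agree_glue_iff A x y τ τ').mpr h), if_pos h]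
      · rw [if_neg (fun hc => h ((agree_glue_iff A x y τ τ').mp hc)), if_neg h, zero_mul]
    rw [Finset.sum_congr rfl fun τ' _ => this τ']
    rw [Finset.sum_ite_eq Finset.univ τ (fun τ' => Q τ x y * f (glueG A y τ'))]
    simp
  rw [sum_split A]
  refine Finset.sum_congr rfl fun τ _ => ?_
  unfold dirichletForm
  rw [Finset.mul_sum]
  refine Finset.sum_congr rfl fun x _ => ?_
  rw [hin τ x]
  have hm : Matrix.mulVec (Q τ) (fun x => f (glueG A x τ)) x
      = ∑ y, Q τ x y * f (glueG A y τ) := by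
    simp [Matrix.mulVec, dotProduct]
  rw [hm]
  unfold condMeas
  have hmarg : (∑ σ' : {v // v ∈ A} → S, μ (glueG A σ' τ)) = margG μ A τ := rfl
  rw [hmarg]
  have h0 : margG μ A τ ≠ 0 := (margG_pos μ hpos A τ).ne'
  field_simp

lemma denom_eq (μ : (V → S) → ℝ) (A : Finset V) (σ : V → S) :
    (∑ η : V → S, if ∀ v, v ∉ A → η v = σ v then μ η else 0) = margG μ A (restC A σ) := by
  rw [sum_split A (fun η => if ∀ v, v ∉ A → η v = σ v then μ η else 0)]
  have hcond : ∀ (τ' : {v // v ∈ Aᶜ} → S) (y : {v // v ∈ A} → S),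
      (∀ v, v ∉ A → glueG A y τ' v = σ v) ↔ τ' = restC A σ := by
    intro τ' y
    rw [agree_iff, restC_glue]
  calc ∑ τ', ∑ y, (if ∀ v, v ∉ A → glueG A y τ' v = σ v then μ (glueG A y τ') else 0)
      = ∑ τ', ∑ y : {v // v ∈ A} → S,
          (if τ' = restC A σ then μ (glueG A y τ') else 0) := by
        refine Finset.sum_congr rfl fun τ' _ => Finset.sum_congr rfl fun y _ => ?_
        rw [if_congr (hcond τ' y) rfl rfl]
    _ = ∑ y : {v // v ∈ A} → S, ∑ τ', (if τ' = restC A σ then μ (glueG A y τ') else 0) :=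
        Finset.sum_comm
    _ = margG μ A (restC A σ) := by
        unfold margG
        refine Finset.sum_congr rfl fun y _ => ?_
        rw [Finset.sum_ite_eq' Finset.univ (restC A σ) (fun τ' => μ (glueG A y τ'))]
        simp

lemma hbK_eq (μ : (V → S) → ℝ) (A : Finset V) (σ σ' : V → S) :
    hbK μ A σ σ' =
      if ∀ v, v ∉ A → σ v = σ' v then condMeas μ A (restC A σ) (restA A σ') else 0 := by
  show (if ∀ v, v ∉ A → σ v = σ' v then
      μ σ' / ∑ η : V → S, if ∀ v, v ∉ A → η v = σ v then μ η else 0 else 0) = _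
  by_cases h : ∀ v, v ∉ A → σ v = σ' v
  · rw [if_pos h, if_pos h, denom_eq]
    have hc : restC A σ = restC A σ' := (agree_iff A σ σ').mp h
    have hglue : glueG A (restA A σ') (restC A σ) = σ' := by
      rw [hc]; exact glue_rest A σ'
    unfold condMeas margG
    rw [hglue]
  · rw [if_neg h, if_neg h]

lemma hbK_nonneg (μ : (V → S) → ℝ) (hpos : ∀ σ, 0 < μ σ) (A : Finset V) (σ σ' : V → S) :
    0 ≤ hbK μ A σ σ' := by
  rw [hbK_eq]
  by_cases h : ∀ v, v ∉ A → σ v = σ' v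
  · rw [if_pos h]; exact condMeas_nonneg μ hpos A _ _
  · rw [if_neg h]

lemma hbK_rowsum (μ : (V → S) → ℝ) (hpos : ∀ σ, 0 < μ σ) [Nonempty (V → S)]
    (A : Finset V) (σ : V → S) : ∑ σ', hbK μ A σ σ' = 1 := by
  calc ∑ σ', hbK μ A σ σ'
      = ∑ σ', (if ∀ v, v ∉ A → σ v = σ' v then condMeas μ A (restC A σ) (restA A σ') else 0) :=
        Finset.sum_congr rfl fun σ' _ => hbK_eq μ A σ σ'
    _ = ∑ τ', ∑ y : {v // v ∈ A} → S,
          (if restC A σ = τ' then condMeas μ A (restC A σ) y else 0) := by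
        rw [sum_split A (fun σ' => if ∀ v, v ∉ A → σ v = σ' v
          then condMeas μ A (restC A σ) (restA A σ') else 0)]
        refine Finset.sum_congr rfl fun τ' _ => Finset.sum_congr rfl fun y _ => ?_
        rw [restA_glue]
        have : (∀ v, v ∉ A → σ v = glueG A y τ' v) ↔ restC A σ = τ' := by
          rw [agree_iff, restC_glue]
        rw [if_congr this rfl rfl]
    _ = ∑ y : {v // v ∈ A} → S, ∑ τ',
          (if restC A σ = τ' then condMeas μ A (restC A σ) y else 0) :=
        Finset.sum_comm
    _ = ∑ y, condMeas μ A (restC A σ) y := by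
        refine Finset.sum_congr rfl fun y _ => ?_
        rw [Finset.sum_ite_eq Finset.univ (restC A σ) (fun _ => condMeas μ A (restC A σ) y)]
        simp
    _ = 1 := condMeas_sum μ hpos A _

lemma hbK_rev (μ : (V → S) → ℝ) (A : Finset V) (σ σ' : V → S) :
    μ σ * hbK μ A σ σ' = μ σ' * hbK μ A σ' σ := by
  rw [hbK_eq, hbK_eq]
  by_cases h : ∀ v, v ∉ A → σ v = σ' v
  · have h' : ∀ v, v ∉ A → σ' v = σ v := fun v hv => (h v hv).symm
    rw [if_pos h, if_pos h']
    have hc : restC A σ = restC A σ' := (agree_iff A σ σ').mp h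
    have h1 : glueG A (restA A σ') (restC A σ) = σ' := by rw [hc]; exact glue_rest A σ'
    have h2 : glueG A (restA A σ) (restC A σ') = σ := by rw [← hc]; exact glue_rest A σ
    unfold condMeas
    rw [h1, h2, ← hc]
    ring
  · have h' : ¬ ∀ v, v ∉ A → σ' v = σ v := fun hc => h fun v hv => (hc v hv).symm
    rw [if_neg h, if_neg h', mul_zero, mul_zero]

end Split

lemma dirichlet_composite {V S : Type*} [Fintype V] [DecidableEq V] [Fintype S]
    (μ : (V → S) → ℝ) (hpos : ∀ σ, 0 < μ σ) [Nonempty (V → S)]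
    {m : ℕ} (hm : (m : ℝ) ≠ 0) (B : Fin m → Finset V)
    (Sk : ∀ k : Fin m, ({v // v ∈ (B k)ᶜ} → S) →
      Matrix ({v // v ∈ B k} → S) ({v // v ∈ B k} → S) ℝ) (f : (V → S) → ℝ) :
    dirichletForm μ (compositeBlock m B Sk) f
        = (m : ℝ)⁻¹ * ∑ k, ∑ τ, margG μ (B k) τ *
            dirichletForm (condMeas μ (B k) τ) (Sk k τ) (fun x => f (glueG (B k) x τ)) := by
  calc dirichletForm μ (compositeBlock m B Sk) f
      = (m : ℝ)⁻¹ * ∑ k, ∑ σ, f σ * (f σ - ∑ σ', (if ∀ v, v ∉ B k → σ v = σ' v then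
          Sk k (restC (B k) σ) (restA (B k) σ) (restA (B k) σ') else 0) * f σ') * μ σ :=
        dir_avg μ hm (compositeBlock m B Sk) _ (fun σ σ' => rfl) f
    _ = (m : ℝ)⁻¹ * ∑ k, ∑ τ, margG μ (B k) τ *
          dirichletForm (condMeas μ (B k) τ) (Sk k τ) (fun x => f (glueG (B k) x τ)) := by
        congr 1
        exact Finset.sum_congr rfl fun k _ => perBlock μ hpos (B k) (Sk k) f

lemma dirichlet_blockHB {V S : Type*} [Fintype V] [DecidableEq V] [Fintype S]
    (μ : (V → S) → ℝ) (hpos : ∀ σ, 0 < μ σ) [Nonempty (V → S)]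
    {m : ℕ} (hm : (m : ℝ) ≠ 0) (B : Fin m → Finset V) (f : (V → S) → ℝ) :
    dirichletForm μ (blockHB μ m B) f
        = (m : ℝ)⁻¹ * ∑ k, ∑ τ, margG μ (B k) τ *
            varMu (condMeas μ (B k) τ) (fun x => f (glueG (B k) x τ)) := by
  have hBentry : ∀ σ σ', blockHB μ m B σ σ' = (m : ℝ)⁻¹ * ∑ k, hbK μ (B k) σ σ' := by
    intro σ σ'
    simp [blockHB, Matrix.smul_apply, Matrix.sum_apply, smul_eq_mul]
  calc dirichletForm μ (blockHB μ m B) f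
      = (m : ℝ)⁻¹ * ∑ k, ∑ σ, f σ * (f σ - ∑ σ', (if ∀ v, v ∉ B k → σ v = σ' v then
          (Matrix.of fun _ y => condMeas μ (B k) (restC (B k) σ) y)
            (restA (B k) σ) (restA (B k) σ') else 0) * f σ') * μ σ := by
        refine dir_avg μ hm (blockHB μ m B) _ (fun σ σ' => ?_) f
        rw [hBentry]
        congr 1
        refine Finset.sum_congr rfl fun k _ => ?_
        rw [hbK_eq μ (B k) σ σ']
        rfl
    _ = (m : ℝ)⁻¹ * ∑ k, ∑ τ, margG μ (B k) τ *
          varMu (condMeas μ (B k) τ) (fun x => f (glueG (B k) x τ)) := by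
        congr 1
        refine Finset.sum_congr rfl fun k _ => ?_
        rw [perBlock μ hpos (B k)
          (fun τ => Matrix.of fun _ y => condMeas μ (B k) τ y) f]
        refine Finset.sum_congr rfl fun τ _ => ?_
        rw [dir_const (condMeas μ (B k) τ) (condMeas_sum μ hpos (B k) τ)]

/-- Comparison of block dynamics: `λ(S_D) ≥ λ(B_D) · min_{k,τ} λ(S_k^τ)`. -/
theorem statement1 {V S : Type*} [Fintype V] [DecidableEq V] [Fintype S] [DecidableEq S]
    (μ : (V → S) → ℝ) (hpos : ∀ σ, 0 < μ σ) (hsum : ∑ σ, μ σ = 1)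
    (m : ℕ) (B : Fin m → Finset V)
    (hcover : Finset.univ.sup B = (Finset.univ : Finset V))
    (Sk : ∀ k : Fin m, ({v // v ∈ (B k)ᶜ} → S) →
      Matrix ({v // v ∈ B k} → S) ({v // v ∈ B k} → S) ℝ)
    (hnn : ∀ k τ, ∀ x y, 0 ≤ Sk k τ x y)
    (hrow : ∀ k τ, ∀ x, ∑ y, Sk k τ x y = 1)
    (herg : ∀ k τ, IsErgodic (Sk k τ))
    (hrev : ∀ k τ, ∀ x y,
      condMeas μ (B k) τ x * Sk k τ x y = condMeas μ (B k) τ y * Sk k τ y x)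
    (hpsd : ∀ k τ, ∀ f, 0 ≤ ∑ x, f x * (Sk k τ).mulVec f x * condMeas μ (B k) τ x) :
    gapD μ (blockHB μ m B) *
        sInf {r : ℝ | ∃ k τ, r = gapD (condMeas μ (B k) τ) (Sk k τ)}
      ≤ gapD μ (compositeBlock m B Sk) := by
  -- the state space is nonempty
  have hΩ : Nonempty (V → S) := by
    by_contra h
    rw [not_nonempty_iff] at h
    rw [Finset.univ_eq_empty, Finset.sum_empty] at hsum
    exact zero_ne_one hsum
  haveI := hΩ
  have hμnn : ∀ σ, 0 ≤ μ σ := fun σ => (hpos σ).le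
  -- trivial case m = 0
  by_cases hm0 : m = 0
  · subst hm0
    have hset : {r : ℝ | ∃ k τ, r = gapD (condMeas μ (B k) τ) (Sk k τ)} = ∅ := by
      ext r
      simp only [Set.mem_setOf_eq, Set.mem_empty_iff_false, iff_false]
      rintro ⟨k, -⟩
      exact k.elim0
    rw [hset, Real.sInf_empty, mul_zero]
    have hzero : compositeBlock 0 B Sk = 0 := by
      ext σ σ'
      simp [compositeBlock]
    apply Real.sInf_nonneg
    rintro r ⟨f, hf, rfl⟩
    have hd : 0 ≤ dirichletForm μ (compositeBlock 0 B Sk) f := by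
      rw [hzero]
      unfold dirichletForm
      refine Finset.sum_nonneg fun σ _ => ?_
      rw [Matrix.zero_mulVec]
      simp only [Pi.zero_apply, sub_zero]
      exact mul_nonneg (mul_self_nonneg _) (hμnn σ)
    exact div_nonneg hd (varMu_nonneg μ hμnn f)
  · have hm : (m : ℝ) ≠ 0 := Nat.cast_ne_zero.mpr hm0
    set Λ := sInf {r : ℝ | ∃ k τ, r = gapD (condMeas μ (B k) τ) (Sk k τ)} with hΛ
    have hgapknn : ∀ k τ, 0 ≤ gapD (condMeas μ (B k) τ) (Sk k τ) := fun k τ =>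
      gap_nonneg _ _ (condMeas_nonneg μ hpos (B k) τ) (hnn k τ) (hrow k τ) (hrev k τ)
    have hΛnn : 0 ≤ Λ := Real.sInf_nonneg (by rintro r ⟨k, τ, rfl⟩; exact hgapknn k τ)
    have hΛle : ∀ k τ, Λ ≤ gapD (condMeas μ (B k) τ) (Sk k τ) := by
      intro k τ
      apply csInf_le
      · exact ⟨0, by rintro r ⟨k', τ', rfl⟩; exact hgapknn k' τ'⟩
      · exact ⟨k, τ, rfl⟩
    -- properties of the heat-bath block dynamics
    have hBentry : ∀ σ σ', blockHB μ m B σ σ' = (m : ℝ)⁻¹ * ∑ k, hbK μ (B k) σ σ' := by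
      intro σ σ'
      simp [blockHB, Matrix.smul_apply, Matrix.sum_apply, smul_eq_mul]
    have hBnn : ∀ σ σ', 0 ≤ blockHB μ m B σ σ' := by
      intro σ σ'
      rw [hBentry]
      exact mul_nonneg (inv_nonneg.mpr (Nat.cast_nonneg m))
        (Finset.sum_nonneg fun k _ => hbK_nonneg μ hpos (B k) σ σ')
    have hBrow : ∀ σ, ∑ σ', blockHB μ m B σ σ' = 1 := by
      intro σ
      calc ∑ σ', blockHB μ m B σ σ'
          = (m : ℝ)⁻¹ * ∑ σ', ∑ k, hbK μ (B k) σ σ' := by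
            rw [Finset.mul_sum]
            exact Finset.sum_congr rfl fun σ' _ => hBentry σ σ'
        _ = (m : ℝ)⁻¹ * ∑ k, ∑ σ', hbK μ (B k) σ σ' := by rw [Finset.sum_comm]
        _ = (m : ℝ)⁻¹ * ∑ k : Fin m, 1 := by
            rw [Finset.sum_congr rfl fun k _ => hbK_rowsum μ hpos (B k) σ]
        _ = 1 := by
            rw [Finset.sum_const, Finset.card_univ, Fintype.card_fin, nsmul_eq_mul,
              mul_one, inv_mul_cancel₀ hm]
    have hBrev : ∀ σ σ', μ σ * blockHB μ m B σ σ' = μ σ' * blockHB μ m B σ' σ := by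
      intro σ σ'
      have haux : ∀ (a : ℝ) (h : Fin m → ℝ),
          a * ((m : ℝ)⁻¹ * ∑ k, h k) = ∑ k, (m : ℝ)⁻¹ * (a * h k) := by
        intro a h
        rw [Finset.mul_sum, Finset.mul_sum]
        exact Finset.sum_congr rfl fun k _ => by ring
      rw [hBentry, hBentry, haux, haux]
      exact Finset.sum_congr rfl fun k _ => by rw [hbK_rev μ (B k) σ σ']
    -- decomposition of the composite Dirichlet form
    have claimA : ∀ f, dirichletForm μ (compositeBlock m B Sk) f
        = (m : ℝ)⁻¹ * ∑ k, ∑ τ, margG μ (B k) τ *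
            dirichletForm (condMeas μ (B k) τ) (Sk k τ) (fun x => f (glueG (B k) x τ)) :=
      fun f => dirichlet_composite μ hpos hm B Sk f
    -- decomposition of the heat-bath Dirichlet form
    have claimB : ∀ f, dirichletForm μ (blockHB μ m B) f
        = (m : ℝ)⁻¹ * ∑ k, ∑ τ, margG μ (B k) τ *
            varMu (condMeas μ (B k) τ) (fun x => f (glueG (B k) x τ)) :=
      fun f => dirichlet_blockHB μ hpos hm B f
    -- key comparison of Dirichlet forms
    have key : ∀ f, Λ * dirichletForm μ (blockHB μ m B) f
        ≤ dirichletForm μ (compositeBlock m B Sk) f := by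
      intro f
      rw [claimA f, claimB f, ← mul_assoc, mul_comm Λ, mul_assoc, Finset.mul_sum]
      apply mul_le_mul_of_nonneg_left _ (inv_nonneg.mpr (Nat.cast_nonneg m))
      refine Finset.sum_le_sum fun k _ => ?_
      rw [Finset.mul_sum]
      refine Finset.sum_le_sum fun τ _ => ?_
      have hvar := varMu_nonneg (condMeas μ (B k) τ) (condMeas_nonneg μ hpos (B k) τ)
        (fun x => f (glueG (B k) x τ))
      have hmargnn : 0 ≤ margG μ (B k) τ := (margG_pos μ hpos (B k) τ).le
      calc Λ * (margG μ (B k) τ *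
            varMu (condMeas μ (B k) τ) (fun x => f (glueG (B k) x τ)))
          = margG μ (B k) τ * (Λ *
              varMu (condMeas μ (B k) τ) (fun x => f (glueG (B k) x τ))) := by ring
        _ ≤ margG μ (B k) τ * (gapD (condMeas μ (B k) τ) (Sk k τ) *
              varMu (condMeas μ (B k) τ) (fun x => f (glueG (B k) x τ))) := by
            apply mul_le_mul_of_nonneg_left _ hmargnn
            exact mul_le_mul_of_nonneg_right (hΛle k τ) hvar
        _ ≤ margG μ (B k) τ * dirichletForm (condMeas μ (B k) τ) (Sk k τ)
              (fun x => f (glueG (B k) x τ)) := by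
            apply mul_le_mul_of_nonneg_left _ hmargnn
            exact gap_mul_var_le _ _ (condMeas_nonneg μ hpos (B k) τ) (hnn k τ)
              (hrow k τ) (hrev k τ) _
    -- conclusion
    by_cases hne : {r : ℝ | ∃ f : (V → S) → ℝ, varMu μ f ≠ 0 ∧
        r = dirichletForm μ (compositeBlock m B Sk) f / varMu μ f}.Nonempty
    · show gapD μ (blockHB μ m B) * Λ ≤ gapD μ (compositeBlock m B Sk)
      unfold gapD
      apply le_csInf hne
      rintro r ⟨f, hvf, rfl⟩
      have hv : 0 < varMu μ f := lt_of_le_of_ne (varMu_nonneg μ hμnn f) (Ne.symm hvf)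
      rw [le_div_iff₀ hv]
      have hBgap : gapD μ (blockHB μ m B) * varMu μ f
          ≤ dirichletForm μ (blockHB μ m B) f :=
        gap_mul_var_le μ (blockHB μ m B) hμnn hBnn hBrow hBrev f
      calc gapD μ (blockHB μ m B) * Λ * varMu μ f
          = Λ * (gapD μ (blockHB μ m B) * varMu μ f) := by ring
        _ ≤ Λ * dirichletForm μ (blockHB μ m B) f :=
            mul_le_mul_of_nonneg_left hBgap hΛnn
        _ ≤ dirichletForm μ (compositeBlock m B Sk) f := key f
    · have hSempty : {r : ℝ | ∃ f : (V → S) → ℝ, varMu μ f ≠ 0 ∧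
          r = dirichletForm μ (compositeBlock m B Sk) f / varMu μ f} = ∅ :=
        Set.not_nonempty_iff_eq_empty.mp hne
      have hBempty : {r : ℝ | ∃ f : (V → S) → ℝ, varMu μ f ≠ 0 ∧
          r = dirichletForm μ (blockHB μ m B) f / varMu μ f} = ∅ := by
        rw [Set.eq_empty_iff_forall_notMem]
        rintro r ⟨f, hvf, -⟩
        have : (dirichletForm μ (compositeBlock m B Sk) f / varMu μ f)
            ∈ {r : ℝ | ∃ f : (V → S) → ℝ, varMu μ f ≠ 0 ∧
              r = dirichletForm μ (compositeBlock m B Sk) f / varMu μ f} := ⟨f, hvf, rfl⟩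
        rw [hSempty] at this
        exact this
      show gapD μ (blockHB μ m B) * Λ ≤ gapD μ (compositeBlock m B Sk)
      unfold gapD
      rw [hSempty, hBempty, Real.sInf_empty, zero_mul]
end

section
/- For the ferromagnetic q-state Potts model (q ≥ 2, β > 0) on the subgraph induced by a finite d-dimensional cube V ⊂ ℤ^d, the spectral gap of the Swendsen–Wang dynamics is at least the spectral gap of the isolated-vertices dynamics: λ(SW) ≥ λ(I_SW). -/
open scoped BigOperators

attribute [local instance] Classical.propDecidable

/-- Vertices of the `d`-dimensional integer lattice `ℤ^d`. -/
abbrev Vtx (d : ℕ) := Fin d → ℤ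

/-- Graph (ℓ¹) distance on `ℤ^d`. -/
def latDist {d : ℕ} (u v : Vtx d) : ℕ := ∑ i, (u i - v i).natAbs

/-- Nearest-neighbor adjacency on `ℤ^d`. -/
def latAdj {d : ℕ} (u v : Vtx d) : Prop := latDist u v = 1

/-- `V` is a `d`-dimensional cube (axis-aligned box with equal sides) in `ℤ^d`. -/
def IsCube {d : ℕ} (V : Finset (Vtx d)) : Prop :=
  ∃ (x : Vtx d) (s : ℕ), ∀ y : Vtx d, y ∈ V ↔ ∀ i, x i ≤ y i ∧ y i < x i + (s : ℤ)

/-- Spin configurations on `V` with spin set `{1,…,q}`. -/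
abbrev Conf {d : ℕ} (V : Finset (Vtx d)) (q : ℕ) := {x // x ∈ V} → Fin q

/-- Unnormalized Potts weight: `exp(β · #{monochromatic edges of σ})`. -/
noncomputable def pottsWeight {d : ℕ} {V : Finset (Vtx d)} (q : ℕ) (β : ℝ)
    (σ : Conf V q) : ℝ :=
  Real.exp (β * ((∑ u : {x // x ∈ V}, ∑ v : {x // x ∈ V},
    if latAdj u.1 v.1 ∧ σ u = σ v then (1 : ℝ) else 0) / 2))

/-- The ferromagnetic `q`-state Potts measure on the subgraph of `ℤ^d` induced by `V`
(with free boundary): `π(σ) ∝ exp(β·|{e ∈ E : σ monochromatic on e}|)`. -/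
noncomputable def potts {d : ℕ} (q : ℕ) (β : ℝ) (V : Finset (Vtx d)) : Conf V q → ℝ :=
  fun σ => pottsWeight q β σ / ∑ σ' : Conf V q, pottsWeight q β σ'

/-- The set `E(σ)` of monochromatic edges of the configuration `σ`. -/
noncomputable def monoEdges {d : ℕ} {V : Finset (Vtx d)} {q : ℕ} (σ : Conf V q) :
    Finset (Sym2 {x // x ∈ V}) :=
  Finset.univ.filter fun e =>
    ∃ u v : {x // x ∈ V}, e = s(u, v) ∧ latAdj u.1 v.1 ∧ σ u = σ v

/-- The graph on `V` with edge set `A`. -/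
def graphOf {d : ℕ} {V : Finset (Vtx d)} (A : Finset (Sym2 {x // x ∈ V})) :
    SimpleGraph {x // x ∈ V} where
  Adj u v := u ≠ v ∧ s(u, v) ∈ A
  symm := by
    constructor
    intro u v h
    exact ⟨h.1.symm, by rw [Sym2.eq_swap]; exact h.2⟩
  loopless := by constructor; intro u h; exact h.1 rfl

/-- `c(A)`: the number of connected components of `(V, A)`. -/
noncomputable def compCount {d : ℕ} {V : Finset (Vtx d)}
    (A : Finset (Sym2 {x // x ∈ V})) : ℕ :=
  Nat.card (graphOf A).ConnectedComponent

/-- The isolated vertices of `(V, A)`. -/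
noncomputable def isoVerts {d : ℕ} {V : Finset (Vtx d)}
    (A : Finset (Sym2 {x // x ∈ V})) : Finset {x // x ∈ V} :=
  Finset.univ.filter fun v => ∀ e ∈ A, v ∉ e

/-- The Swendsen–Wang transition matrix:
`SW(σ,σ') = Σ_{A ⊆ E(σ)∩E(σ')} p^{|A|} (1−p)^{|E(σ)∖A|} q^{−c(A)}`, `p = 1 − e^{−β}`. -/
noncomputable def SWmat {d : ℕ} (q : ℕ) (β : ℝ) (V : Finset (Vtx d)) :
    Matrix (Conf V q) (Conf V q) ℝ :=
  Matrix.of fun σ σ' =>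
    ∑ A ∈ (monoEdges σ ∩ monoEdges σ').powerset,
      (1 - Real.exp (-β)) ^ A.card * Real.exp (-β) ^ ((monoEdges σ).card - A.card)
        * ((q : ℝ) ^ compCount A)⁻¹

/-- The isolated-vertices dynamics `I_SW`: add each monochromatic edge independently with
probability `p = 1 − e^{−β}`, then resample uniformly the spins of the isolated vertices. -/
noncomputable def ISWmat {d : ℕ} (q : ℕ) (β : ℝ) (V : Finset (Vtx d)) :
    Matrix (Conf V q) (Conf V q) ℝ :=
  Matrix.of fun σ σ' =>
    ∑ A ∈ (monoEdges σ).powerset,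
      (1 - Real.exp (-β)) ^ A.card * Real.exp (-β) ^ ((monoEdges σ).card - A.card) *
        (if ∀ v : {x // x ∈ V}, v ∉ isoVerts A → σ' v = σ v
         then ((q : ℝ) ^ (isoVerts A).card)⁻¹ else 0)

/-- Inner product in `L²(μ)`. -/
noncomputable def innerMu {Ω : Type*} [Fintype Ω] (μ f g : Ω → ℝ) : ℝ :=
  ∑ x, f x * g x * μ x

/-!
By the Edwards–Sokal coupling, `π(σ) ∝ e^{β|E(σ)|} = ∑_{A ⊆ E(σ)} (e^β - 1)^{|A|}` and
`π(σ) p^{|A|} (1-p)^{|E(σ)∖A|} ∝ (e^β - 1)^{|A|}`. Hence each of the quadratic forms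
`⟨f, SW f⟩_π`, `⟨f, I_SW f⟩_π`, `⟨f, f⟩_π` is a nonnegative combination over edge sets `A` of,
respectively, `q^{-c(A)} (∑_{Ω_A} f)²`, `q^{-k(A)} ∑_τ (∑_{σ ∈ Ω_A, σ|_{A-non-isolated} = τ} f)²`
and `∑_{Ω_A} f²`, where `Ω_A` is the set of configurations making every edge of `A`
monochromatic and `k(A)` the number of isolated vertices of `(V, A)`. Since `|Ω_A| ≤ q^{c(A)}`
and the fibres of the restriction to non-isolated vertices have exactly `q^{k(A)}` elements in
`Ω_A`, Cauchy–Schwarz gives `SW ≤ I_SW ≤ I` as quadratic forms, so the Dirichlet forms, and with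
them the spectral gaps, compare the other way.
-/

open Finset
open scoped Matrix

namespace Finset

variable {α β : Type*} [DecidableEq β] (s : Finset α) (φ : α → β) (h : α → ℝ)

lemma sum_sum_ite_eq_sum_sq_fiberwise :
    ∑ a ∈ s, ∑ a' ∈ s, (if φ a' = φ a then h a * h a' else 0)
      = ∑ b ∈ s.image φ, (∑ a ∈ s with φ a = b, h a) ^ 2 := by
  refine (sum_image' _ fun a _ => ?_).symm
  rw [sq, sum_mul]
  refine sum_congr rfl fun a' ha' => ?_
  rw [(mem_filter.mp ha').2, ← sum_filter, mul_sum]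

lemma sum_sq_fiberwise_le {K : ℕ} (hK : ∀ a ∈ s, #{a' ∈ s | φ a' = φ a} ≤ K) :
    ∑ b ∈ s.image φ, (∑ a ∈ s with φ a = b, h a) ^ 2 ≤ K * ∑ a ∈ s, h a ^ 2 := by
  rw [← sum_fiberwise_of_maps_to (fun a ha => mem_image_of_mem φ ha) (fun a => h a ^ 2), mul_sum]
  refine sum_le_sum fun b hb => ?_
  obtain ⟨a, ha, rfl⟩ := mem_image.mp hb
  exact sq_sum_le_card_mul_sum_sq.trans
    (mul_le_mul_of_nonneg_right (by exact_mod_cast hK a ha) (sum_nonneg fun _ _ => sq_nonneg _))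

lemma mul_sq_sum_le_sum_sq_fiberwise {K : ℕ} (hK : ∀ a ∈ s, K ≤ #{a' ∈ s | φ a' = φ a}) :
    K * (∑ a ∈ s, h a) ^ 2 ≤ #s * ∑ b ∈ s.image φ, (∑ a ∈ s with φ a = b, h a) ^ 2 := by
  have hcard : K * #(s.image φ) ≤ #s := by
    rw [card_eq_sum_card_fiberwise (fun a ha => mem_image_of_mem φ ha), mul_comm,
      ← smul_eq_mul, ← sum_const]
    refine sum_le_sum fun b hb => ?_
    obtain ⟨a, ha, rfl⟩ := mem_image.mp hb
    exact hK a ha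
  rw [← sum_fiberwise_of_maps_to (fun a ha => mem_image_of_mem φ ha) h]
  calc (K : ℝ) * (∑ b ∈ s.image φ, ∑ a ∈ s with φ a = b, h a) ^ 2
      ≤ K * (#(s.image φ) * ∑ b ∈ s.image φ, (∑ a ∈ s with φ a = b, h a) ^ 2) :=
        mul_le_mul_of_nonneg_left sq_sum_le_card_mul_sum_sq (Nat.cast_nonneg K)
    _ ≤ #s * ∑ b ∈ s.image φ, (∑ a ∈ s with φ a = b, h a) ^ 2 := by
        rw [← mul_assoc]
        gcongr
        exact_mod_cast hcard

end Finset

section SpectralGap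

variable {Ω : Type*} [Fintype Ω]

lemma dirichletForm_eq_innerMu_sub (μ : Ω → ℝ) (P : Matrix Ω Ω ℝ) (f : Ω → ℝ) :
    dirichletForm μ P f = innerMu μ f f - innerMu μ f (P *ᵥ f) := by
  rw [dirichletForm, innerMu, innerMu, ← sum_sub_distrib]
  exact sum_congr rfl fun x _ => by ring

lemma gapD_le_gapD {μ : Ω → ℝ} (hμ : ∀ x, 0 ≤ μ x) {P Q : Matrix Ω Ω ℝ}
    (hP : ∀ f, 0 ≤ dirichletForm μ P f) (hPQ : ∀ f, dirichletForm μ P f ≤ dirichletForm μ Q f) :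
    gapD μ P ≤ gapD μ Q := by
  have hvar : ∀ f, 0 ≤ varMu μ f := fun f =>
    sum_nonneg fun x _ => mul_nonneg (sq_nonneg _) (hμ x)
  rw [gapD, gapD]
  rcases isEmpty_or_nonempty {f : Ω → ℝ // varMu μ f ≠ 0} with hempty | ⟨⟨f₀, hf₀⟩⟩
  · have hset : ∀ R : Matrix Ω Ω ℝ,
        {r : ℝ | ∃ f : Ω → ℝ, varMu μ f ≠ 0 ∧ r = dirichletForm μ R f / varMu μ f} = ∅ :=
      fun R => Set.eq_empty_of_forall_notMem fun r hr => by
        obtain ⟨f, hf, -⟩ := hr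
        exact hempty.false ⟨f, hf⟩
    rw [hset, hset]
  · refine le_csInf ⟨_, f₀, hf₀, rfl⟩ ?_
    rintro r ⟨f, hf, rfl⟩
    refine le_trans (csInf_le ⟨0, ?_⟩ ⟨f, hf, rfl⟩) (div_le_div_of_nonneg_right (hPQ f) (hvar f))
    rintro r ⟨g, -, rfl⟩
    exact div_nonneg (hP g) (hvar g)

end SpectralGap

namespace Potts

variable {d : ℕ} {V : Finset (Vtx d)} {q : ℕ}

lemma latAdj_symm {u v : Vtx d} (h : latAdj u v) : latAdj v u := by
  unfold latAdj latDist at h ⊢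
  simpa only [← Int.natAbs_neg (u _ - v _), neg_sub] using h

lemma latAdj_irrefl (u : Vtx d) : ¬ latAdj u u := by
  simp [latAdj, latDist]

def monoGraph (σ : Conf V q) : SimpleGraph {x // x ∈ V} where
  Adj u v := latAdj u.1 v.1 ∧ σ u = σ v
  symm := ⟨fun _ _ h => ⟨latAdj_symm h.1, h.2.symm⟩⟩
  loopless := ⟨fun _ h => latAdj_irrefl _ h.1⟩

lemma mem_monoEdges_iff {σ : Conf V q} {u v : {x // x ∈ V}} :
    s(u, v) ∈ monoEdges σ ↔ latAdj u.1 v.1 ∧ σ u = σ v := by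
  constructor
  · intro h
    obtain ⟨-, a, b, he, hadj, hσ⟩ := Finset.mem_filter.mp h
    rcases Sym2.eq_iff.mp he with ⟨rfl, rfl⟩ | ⟨rfl, rfl⟩
    · exact ⟨hadj, hσ⟩
    · exact ⟨latAdj_symm hadj, hσ.symm⟩
  · rintro ⟨h1, h2⟩
    exact Finset.mem_filter.mpr ⟨Finset.mem_univ _, u, v, rfl, h1, h2⟩

lemma edgeFinset_monoGraph (σ : Conf V q) : (monoGraph σ).edgeFinset = monoEdges σ := by
  ext e
  induction e using Sym2.ind with
  | h u v => rw [SimpleGraph.mem_edgeFinset, SimpleGraph.mem_edgeSet, mem_monoEdges_iff]; rfl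

lemma pottsWeight_eq (β : ℝ) (σ : Conf V q) :
    pottsWeight q β σ = Real.exp (β * #(monoEdges σ)) := by
  have hdeg : ∀ u, (∑ v : {x // x ∈ V}, if latAdj u.1 v.1 ∧ σ u = σ v then (1 : ℝ) else 0)
      = (monoGraph σ).degree u := by
    intro u
    rw [sum_boole, ← SimpleGraph.card_neighborFinset_eq_degree,
      SimpleGraph.neighborFinset_eq_filter]
    congr
  rw [pottsWeight, sum_congr rfl fun u _ => hdeg u, ← Nat.cast_sum,
    SimpleGraph.sum_degrees_eq_twice_card_edges, edgeFinset_monoGraph]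
  push_cast
  ring_nf

noncomputable def partitionFn (q : ℕ) (β : ℝ) (V : Finset (Vtx d)) : ℝ :=
  ∑ σ : Conf V q, pottsWeight q β σ

lemma potts_eq (β : ℝ) (σ : Conf V q) :
    potts q β V σ = Real.exp (β * #(monoEdges σ)) / partitionFn q β V := by
  rw [potts, pottsWeight_eq, partitionFn]

noncomputable def compatConfs (A : Finset (Sym2 {x // x ∈ V})) : Finset (Conf V q) :=
  {σ | A ⊆ monoEdges σ}

@[simp]
lemma mem_compatConfs {A : Finset (Sym2 {x // x ∈ V})} {σ : Conf V q} :
    σ ∈ compatConfs A ↔ A ⊆ monoEdges σ := by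
  simp [compatConfs]

lemma exp_mul_percolationWeight (β : ℝ) {m a : ℕ} (ham : a ≤ m) :
    Real.exp (β * m) * ((1 - Real.exp (-β)) ^ a * Real.exp (-β) ^ (m - a))
      = (Real.exp β - 1) ^ a := by
  obtain ⟨b, rfl⟩ := Nat.exists_eq_add_of_le ham
  have hE : Real.exp β ≠ 0 := (Real.exp_pos β).ne'
  rw [mul_comm β, Real.exp_nat_mul, Real.exp_neg, Nat.add_sub_cancel_left, pow_add]
  calc Real.exp β ^ a * Real.exp β ^ b * ((1 - (Real.exp β)⁻¹) ^ a * (Real.exp β)⁻¹ ^ b)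
      = (Real.exp β * (1 - (Real.exp β)⁻¹)) ^ a * (Real.exp β * (Real.exp β)⁻¹) ^ b := by
        rw [mul_pow, mul_pow]; ring
    _ = (Real.exp β - 1) ^ a := by rw [mul_sub, mul_inv_cancel₀ hE, one_pow, mul_one, mul_one]

/-- Edwards–Sokal expansion of the quadratic form of a chain that first draws a percolation
configuration `A ⊆ E(σ)` and then moves according to a kernel `R A`. -/
lemma innerMu_mulVec_eq_sum_compatConfs (β : ℝ) (P : Matrix (Conf V q) (Conf V q) ℝ)
    (R : Finset (Sym2 {x // x ∈ V}) → Conf V q → Conf V q → ℝ)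
    (hP : ∀ σ σ', P σ σ' = ∑ A ∈ (monoEdges σ).powerset,
      (1 - Real.exp (-β)) ^ #A * Real.exp (-β) ^ (#(monoEdges σ) - #A) * R A σ σ')
    (f : Conf V q → ℝ) :
    innerMu (potts q β V) f (P *ᵥ f) = (partitionFn q β V)⁻¹ * ∑ A,
      (Real.exp β - 1) ^ #A * ∑ σ ∈ compatConfs A, ∑ σ', f σ * R A σ σ' * f σ' := by
  have hσ : ∀ σ, f σ * (P *ᵥ f) σ * potts q β V σ = ∑ A ∈ (monoEdges σ).powerset,
      (partitionFn q β V)⁻¹ * ((Real.exp β - 1) ^ #A * ∑ σ', f σ * R A σ σ' * f σ') := by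
    intro σ
    simp only [Matrix.mulVec, dotProduct, hP, sum_mul, mul_sum]
    rw [sum_comm]
    refine sum_congr rfl fun A hA => sum_congr rfl fun σ' _ => ?_
    rw [← exp_mul_percolationWeight β (card_le_card (mem_powerset.mp hA)), potts_eq]
    ring
  rw [innerMu, sum_congr rfl fun σ _ => hσ σ,
    sum_comm' (t' := univ) (s' := compatConfs) fun σ A => by simp]
  simp only [← mul_sum]

lemma one_apply_eq_sum (β : ℝ) (σ σ' : Conf V q) :
    (1 : Matrix (Conf V q) (Conf V q) ℝ) σ σ' = ∑ A ∈ (monoEdges σ).powerset,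
      (1 - Real.exp (-β)) ^ #A * Real.exp (-β) ^ (#(monoEdges σ) - #A)
        * (if σ = σ' then 1 else 0) := by
  rw [← sum_mul, sum_pow_mul_eq_add_pow, sub_add_cancel, one_pow, one_mul, Matrix.one_apply]

lemma SWmat_apply_eq_sum (β : ℝ) (σ σ' : Conf V q) :
    SWmat q β V σ σ' = ∑ A ∈ (monoEdges σ).powerset,
      (1 - Real.exp (-β)) ^ #A * Real.exp (-β) ^ (#(monoEdges σ) - #A)
        * (if A ⊆ monoEdges σ' then ((q : ℝ) ^ compCount A)⁻¹ else 0) := by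
  simp only [mul_ite, mul_zero]
  rw [← sum_filter, SWmat, Matrix.of_apply]
  congr 1
  ext A
  simp only [mem_filter, mem_powerset, subset_inter_iff]

def nonIsoPart (A : Finset (Sym2 {x // x ∈ V})) (σ : Conf V q) :
    {v : {x // x ∈ V} // v ∉ isoVerts A} → Fin q :=
  fun v => σ v

lemma nonIsoPart_eq_iff {A : Finset (Sym2 {x // x ∈ V})} {σ σ' : Conf V q} :
    nonIsoPart A σ' = nonIsoPart A σ ↔ ∀ v, v ∉ isoVerts A → σ' v = σ v :=
  ⟨fun h v hv => congrFun h ⟨v, hv⟩, fun h => funext fun v => h v v.2⟩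

lemma card_nonIsoPart_fiber (A : Finset (Sym2 {x // x ∈ V})) (σ : Conf V q) :
    #{σ' : Conf V q | nonIsoPart A σ' = nonIsoPart A σ} = q ^ #(isoVerts A) := by
  have hpi : ({σ' | nonIsoPart A σ' = nonIsoPart A σ} : Finset (Conf V q))
      = Fintype.piFinset fun v => if v ∈ isoVerts A then univ else {σ v} := by
    ext σ'
    simp only [mem_filter, mem_univ, true_and, nonIsoPart_eq_iff, Fintype.mem_piFinset]
    refine forall_congr' fun v => ?_
    split_ifs with hv <;> simp [hv]
  rw [hpi, Fintype.card_piFinset]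
  simp_rw [apply_ite card, card_univ, Fintype.card_fin, card_singleton]
  rw [prod_ite_mem, univ_inter, prod_const]

lemma subset_monoEdges_of_nonIsoPart_eq {A : Finset (Sym2 {x // x ∈ V})} {σ σ' : Conf V q}
    (hA : A ⊆ monoEdges σ) (h : nonIsoPart A σ' = nonIsoPart A σ) : A ⊆ monoEdges σ' := by
  intro e he
  obtain ⟨-, u, v, rfl, hadj, hσ⟩ := mem_filter.mp (hA he)
  have hnoniso : ∀ w ∈ s(u, v), w ∉ isoVerts A := fun w hw hiso =>
    (mem_filter.mp hiso).2 _ he hw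
  have hu := nonIsoPart_eq_iff.mp h u (hnoniso u (Sym2.mem_mk_left u v))
  have hv := nonIsoPart_eq_iff.mp h v (hnoniso v (Sym2.mem_mk_right u v))
  exact mem_monoEdges_iff.mpr ⟨hadj, by rw [hu, hv, hσ]⟩

/-- Resampling the isolated vertices keeps every edge of `A` monochromatic. -/
lemma card_nonIsoPart_fiber_compatConfs {A : Finset (Sym2 {x // x ∈ V})} {σ : Conf V q}
    (hσ : σ ∈ compatConfs A) :
    #{σ' ∈ compatConfs A | nonIsoPart A σ' = nonIsoPart A σ} = q ^ #(isoVerts A) := by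
  rw [← card_nonIsoPart_fiber A σ]
  congr 1
  ext σ'
  simp only [mem_filter, mem_univ, true_and, mem_compatConfs] at hσ ⊢
  exact ⟨And.right, fun h => ⟨subset_monoEdges_of_nonIsoPart_eq hσ h, h⟩⟩

lemma apply_eq_apply_of_reachable {A : Finset (Sym2 {x // x ∈ V})} {σ : Conf V q}
    (hA : A ⊆ monoEdges σ) {u v : {x // x ∈ V}} (h : (graphOf A).Reachable u v) :
    σ u = σ v := by
  obtain ⟨w⟩ := h
  induction w with
  | nil => rfl
  | cons hadj _ ih => exact (mem_monoEdges_iff.mp (hA hadj.2)).2.trans ih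

/-- A configuration compatible with `A` is constant on the clusters of `A`. -/
lemma card_compatConfs_le (A : Finset (Sym2 {x // x ∈ V})) :
    #(compatConfs A : Finset (Conf V q)) ≤ q ^ compCount A := by
  calc #(compatConfs A : Finset (Conf V q))
      ≤ #(univ : Finset ((graphOf A).ConnectedComponent → Fin q)) := by
        refine card_le_card_of_injOn (fun σ C => σ C.out) (fun _ _ => mem_univ _) ?_
        intro σ hσ σ' hσ' h
        funext v
        have hv : (graphOf A).Reachable v (graphOf A |>.connectedComponentMk v).out :=
          SimpleGraph.ConnectedComponent.exact (Quot.out_eq _).symm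
        rw [apply_eq_apply_of_reachable (mem_compatConfs.mp hσ) hv,
          apply_eq_apply_of_reachable (mem_compatConfs.mp hσ') hv]
        exact congrFun h _
    _ = q ^ compCount A := by
        rw [card_univ, ← Nat.card_eq_fintype_card, Nat.card_fun, Nat.card_eq_fintype_card,
          Fintype.card_fin, compCount]

lemma innerMu_self_eq (β : ℝ) (f : Conf V q → ℝ) :
    innerMu (potts q β V) f f = (partitionFn q β V)⁻¹ * ∑ A,
      (Real.exp β - 1) ^ #A * ∑ σ ∈ compatConfs A, f σ ^ 2 := by
  have h := innerMu_mulVec_eq_sum_compatConfs β 1 _ (one_apply_eq_sum β) f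
  rw [Matrix.one_mulVec] at h
  rw [h]
  simp only [mul_ite, ite_mul, mul_one, mul_zero, zero_mul, sum_ite_eq, mem_univ, if_true, sq]

lemma innerMu_SWmat_eq (β : ℝ) (f : Conf V q → ℝ) :
    innerMu (potts q β V) f (SWmat q β V *ᵥ f) = (partitionFn q β V)⁻¹ * ∑ A,
      (Real.exp β - 1) ^ #A * (((q : ℝ) ^ compCount A)⁻¹ * (∑ σ ∈ compatConfs A, f σ) ^ 2) := by
  rw [innerMu_mulVec_eq_sum_compatConfs β _ _ (SWmat_apply_eq_sum β) f]
  refine congrArg _ (sum_congr rfl fun A _ => congrArg _ ?_)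
  simp only [← mem_compatConfs, mul_ite, ite_mul, mul_zero, zero_mul, sum_ite_mem, univ_inter]
  rw [sq, sum_mul_sum]
  simp only [mul_sum]
  exact sum_congr rfl fun σ _ => sum_congr rfl fun σ' _ => by ring

lemma innerMu_ISWmat_eq (β : ℝ) (f : Conf V q → ℝ) :
    innerMu (potts q β V) f (ISWmat q β V *ᵥ f) = (partitionFn q β V)⁻¹ * ∑ A,
      (Real.exp β - 1) ^ #A * (((q : ℝ) ^ #(isoVerts A))⁻¹ *
        ∑ τ ∈ (compatConfs A).image (nonIsoPart A),
          (∑ σ ∈ compatConfs A with nonIsoPart A σ = τ, f σ) ^ 2) := by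
  rw [innerMu_mulVec_eq_sum_compatConfs β (ISWmat q β V)
    (fun A σ σ' => if ∀ v, v ∉ isoVerts A → σ' v = σ v then ((q : ℝ) ^ #(isoVerts A))⁻¹ else 0)
    (fun _ _ => rfl) f]
  refine congrArg _ (sum_congr rfl fun A _ => congrArg _ ?_)
  rw [← sum_sum_ite_eq_sum_sq_fiberwise, mul_sum]
  refine sum_congr rfl fun σ hσ => ?_
  have hfiber : ∀ σ' : Conf V q, (∀ v, v ∉ isoVerts A → σ' v = σ v) ↔
      σ' ∈ compatConfs A ∧ nonIsoPart A σ' = nonIsoPart A σ := fun σ' => by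
    rw [← nonIsoPart_eq_iff]
    refine ⟨fun h => ⟨?_, h⟩, And.right⟩
    exact mem_compatConfs.mpr (subset_monoEdges_of_nonIsoPart_eq (mem_compatConfs.mp hσ) h)
  simp only [hfiber, ite_and, mul_ite, ite_mul, mul_zero, zero_mul, sum_ite_mem, univ_inter,
    mul_sum]
  refine sum_congr rfl fun σ' _ => ?_
  split_ifs <;> ring

lemma partitionFn_nonneg (β : ℝ) : 0 ≤ partitionFn q β V :=
  sum_nonneg fun _ _ => (Real.exp_pos _).le

lemma potts_nonneg (β : ℝ) (σ : Conf V q) : 0 ≤ potts q β V σ := by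
  rw [potts_eq]
  exact div_nonneg (Real.exp_pos _).le (partitionFn_nonneg β)

lemma swSummand_le_iswSummand (hq : 0 < q) (A : Finset (Sym2 {x // x ∈ V})) (f : Conf V q → ℝ) :
    ((q : ℝ) ^ compCount A)⁻¹ * (∑ σ ∈ compatConfs A, f σ) ^ 2
      ≤ ((q : ℝ) ^ #(isoVerts A))⁻¹ * ∑ τ ∈ (compatConfs A).image (nonIsoPart A),
          (∑ σ ∈ compatConfs A with nonIsoPart A σ = τ, f σ) ^ 2 := by
  have hfib := mul_sq_sum_le_sum_sq_fiberwise (compatConfs A) (nonIsoPart A) f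
    (K := q ^ #(isoVerts A)) fun σ hσ => (card_nonIsoPart_fiber_compatConfs hσ).ge
  have hcard : (#(compatConfs A : Finset (Conf V q)) : ℝ) ≤ (q : ℝ) ^ compCount A := by
    exact_mod_cast card_compatConfs_le A
  rw [inv_mul_le_iff₀ (by positivity), mul_left_comm, le_inv_mul_iff₀ (by positivity)]
  push_cast at hfib
  exact hfib.trans (mul_le_mul_of_nonneg_right hcard (sum_nonneg fun _ _ => sq_nonneg _))

lemma iswSummand_le_sum_sq (hq : 0 < q) (A : Finset (Sym2 {x // x ∈ V})) (f : Conf V q → ℝ) :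
    ((q : ℝ) ^ #(isoVerts A))⁻¹ * ∑ τ ∈ (compatConfs A).image (nonIsoPart A),
        (∑ σ ∈ compatConfs A with nonIsoPart A σ = τ, f σ) ^ 2
      ≤ ∑ σ ∈ compatConfs A, f σ ^ 2 := by
  have hfib := sum_sq_fiberwise_le (compatConfs A) (nonIsoPart A) f
    (K := q ^ #(isoVerts A)) fun σ hσ => (card_nonIsoPart_fiber_compatConfs hσ).le
  rw [inv_mul_le_iff₀ (by positivity)]
  exact_mod_cast hfib

lemma innerMu_SWmat_le_innerMu_ISWmat (hq : 0 < q) {β : ℝ} (hβ : 0 ≤ β) (f : Conf V q → ℝ) :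
    innerMu (potts q β V) f (SWmat q β V *ᵥ f) ≤ innerMu (potts q β V) f (ISWmat q β V *ᵥ f) := by
  rw [innerMu_SWmat_eq, innerMu_ISWmat_eq]
  exact mul_le_mul_of_nonneg_left (sum_le_sum fun A _ => mul_le_mul_of_nonneg_left
    (swSummand_le_iswSummand hq A f) (pow_nonneg (sub_nonneg.mpr (Real.one_le_exp hβ)) _))
    (inv_nonneg.mpr (partitionFn_nonneg β))

lemma innerMu_ISWmat_le_innerMu_self (hq : 0 < q) {β : ℝ} (hβ : 0 ≤ β) (f : Conf V q → ℝ) :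
    innerMu (potts q β V) f (ISWmat q β V *ᵥ f) ≤ innerMu (potts q β V) f f := by
  rw [innerMu_ISWmat_eq, innerMu_self_eq]
  exact mul_le_mul_of_nonneg_left (sum_le_sum fun A _ => mul_le_mul_of_nonneg_left
    (iswSummand_le_sum_sq hq A f) (pow_nonneg (sub_nonneg.mpr (Real.one_le_exp hβ)) _))
    (inv_nonneg.mpr (partitionFn_nonneg β))

end Potts

theorem statement8_general (d q : ℕ) (β : ℝ) (hq : 2 ≤ q) (hβ : 0 < β)
    (V : Finset (Vtx d)) :
    gapD (potts q β V) (ISWmat q β V) ≤ gapD (potts q β V) (SWmat q β V) := by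
  have hq₀ : 0 < q := by omega
  refine gapD_le_gapD (Potts.potts_nonneg β) (fun f => ?_) (fun f => ?_)
  · rw [dirichletForm_eq_innerMu_sub]
    linarith [Potts.innerMu_ISWmat_le_innerMu_self hq₀ hβ.le f]
  · rw [dirichletForm_eq_innerMu_sub, dirichletForm_eq_innerMu_sub]
    linarith [Potts.innerMu_SWmat_le_innerMu_ISWmat hq₀ hβ.le f]

/-- For the ferromagnetic `q`-state Potts model on a cube of `ℤ^d`, the Swendsen–Wang
dynamics has spectral gap at least that of the isolated-vertices dynamics:
`λ(SW) ≥ λ(I_SW)`. -/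
theorem statement8 (d q : ℕ) (β : ℝ) (hq : 2 ≤ q) (hβ : 0 < β)
    (V : Finset (Vtx d)) (hV : IsCube V) :
    gapD (potts q β V) (ISWmat q β V) ≤ gapD (potts q β V) (SWmat q β V) :=
  statement8_general d q β hq hβ V
end
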